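/- Let 𝒜 be an arbitrary linear operator from Hermitian n×n matrices to ℝ^m, let X̂ = x̂x̂* be rank-one PSD, e ∈ ℝ^m, and b = 𝒜(X̂) + e with ‖b‖₂ > ‖e‖₂. Define φ(X) = (1/2)‖𝒜(X) − b‖₂² + λ(Tr(X) − ‖X‖_F). If λ > ‖𝒜‖‖e‖₂/(√2 − 1) and X^opt is a global minimizer of φ over PSD matrices satisfying the KKT first-order optimality conditions, then rank(X^opt) = 1. -/

import Mathlib

open Matrix
open scoped ComplexOrder

noncomputable def frob {n : ℕ} (X : Matrix (Fin n) (Fin n) ℂ) : ℝ :=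
  Real.sqrt ((Xᴴ * X).trace.re)

noncomputable def enormR {m : ℕ} (v : Fin m → ℝ) : ℝ :=
  Real.sqrt (∑ i, (v i) ^ 2)

/-- Operator norm of a linear map `𝒜` restricted to Hermitian matrices,
with Frobenius norm on the source and Euclidean norm on the target. -/
noncomputable def opNormL {n m : ℕ}
    (𝒜 : Matrix (Fin n) (Fin n) ℂ →ₗ[ℝ] (Fin m → ℝ)) : ℝ :=
  sSup {t : ℝ | ∃ X : Matrix (Fin n) (Fin n) ℂ, X.IsHermitian ∧ X ≠ 0 ∧
    t = enormR (𝒜 X) / frob X}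

noncomputable def phi {n m : ℕ} (𝒜 : Matrix (Fin n) (Fin n) ℂ →ₗ[ℝ] (Fin m → ℝ))
    (b : Fin m → ℝ) (lam : ℝ) (X : Matrix (Fin n) (Fin n) ℂ) : ℝ :=
  (1 / 2) * (enormR (𝒜 X - b)) ^ 2 + lam * (X.trace.re - frob X)

/-!
Comparing with the ground truth `x̂ x̂ᴴ`, whose penalty `Tr − ‖·‖_F` vanishes while that of any PSD
matrix is nonnegative, shows that the residual `r = 𝒜 X − b` of a minimizer satisfies
`‖r‖ ≤ ‖e‖`; hence `M = 𝒜* r` has `‖M‖_F² = ⟨𝒜 M, r⟩ ≤ ‖𝒜‖ ‖M‖_F ‖e‖`, i.e.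
`‖M‖_F < λ (√2 - 1)`. Complementary slackness forces `Λ X = 0`, so on an eigenvector of `X`
with eigenvalue `σᵢ ≠ 0` the stationarity condition reads `M vᵢ = λ (σᵢ / ‖X‖_F - 1) vᵢ`.
With `tᵢ = σᵢ / ‖X‖_F`, so that `∑ tᵢ² = 1`, and `k = rank X`, Cauchy–Schwarz gives
`(√k - 1)² ≤ ∑ (tᵢ - 1)² ≤ ‖M‖_F² / λ² < (√2 - 1)²`, hence `k = 1`.
-/

section Norms

variable {m n : ℕ}

lemma enormR_nonneg (v : Fin m → ℝ) : 0 ≤ enormR v := Real.sqrt_nonneg _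

lemma frob_nonneg (X : Matrix (Fin n) (Fin n) ℂ) : 0 ≤ frob X := Real.sqrt_nonneg _

lemma enormR_neg (v : Fin m → ℝ) : enormR (-v) = enormR v := by
  simp [enormR]

lemma enormR_eq_norm (v : Fin m → ℝ) : enormR v = ‖WithLp.toLp 2 v‖ := by
  simp [enormR, EuclideanSpace.norm_eq]

lemma sum_mul_le_enormR_mul_enormR (v w : Fin m → ℝ) :
    ∑ i, v i * w i ≤ enormR v * enormR w :=
  Real.sum_mul_le_sqrt_mul_sqrt _ v w

lemma re_trace_conjTranspose_mul_self (X : Matrix (Fin n) (Fin n) ℂ) :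
    (Xᴴ * X).trace.re = ∑ i, ∑ j, ‖X j i‖ ^ 2 := by
  simp only [Matrix.trace, Matrix.diag, Matrix.mul_apply, Matrix.conjTranspose_apply,
    Complex.re_sum]
  refine Finset.sum_congr rfl fun i _ => Finset.sum_congr rfl fun j _ => ?_
  simp [← Complex.normSq_eq_conj_mul_self, Complex.normSq_eq_norm_sq, -Complex.ofReal_pow]

lemma frob_sq (X : Matrix (Fin n) (Fin n) ℂ) : frob X ^ 2 = (Xᴴ * X).trace.re :=
  Real.sq_sqrt <| re_trace_conjTranspose_mul_self X ▸ by positivity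

attribute [local instance] Matrix.frobeniusSeminormedAddCommGroup in
lemma frob_eq_norm (X : Matrix (Fin n) (Fin n) ℂ) : frob X = ‖X‖ := by
  rw [frob, re_trace_conjTranspose_mul_self, Matrix.frobenius_norm_def, Finset.sum_comm,
    Real.sqrt_eq_rpow]
  simp only [Real.rpow_two]

attribute [local instance] Matrix.frobeniusNormedAddCommGroup in
lemma frob_pos {X : Matrix (Fin n) (Fin n) ℂ} (hX : X ≠ 0) : 0 < frob X :=
  frob_eq_norm X ▸ norm_pos_iff.mpr hX

attribute [local instance] Matrix.frobeniusSeminormedAddCommGroup Matrix.frobeniusNormedSpace in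
lemma exists_enormR_le_mul_frob (𝒜 : Matrix (Fin n) (Fin n) ℂ →ₗ[ℝ] (Fin m → ℝ)) :
    ∃ C, ∀ X, enormR (𝒜 X) ≤ C * frob X := by
  let L : Matrix (Fin n) (Fin n) ℂ →ₗ[ℝ] EuclideanSpace ℝ (Fin m) :=
    (WithLp.linearEquiv 2 ℝ (Fin m → ℝ)).symm.toLinearMap ∘ₗ 𝒜
  obtain ⟨C, -, hC⟩ := SemilinearMapClass.bound_of_continuous L L.continuous_of_finiteDimensional
  exact ⟨C, fun X => by simpa [enormR_eq_norm, frob_eq_norm, L] using hC X⟩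

end Norms

section OpNorm

variable {m n : ℕ} (𝒜 : Matrix (Fin n) (Fin n) ℂ →ₗ[ℝ] (Fin m → ℝ))

lemma opNormL_nonneg : 0 ≤ opNormL 𝒜 :=
  Real.sSup_nonneg fun _ ⟨X, _, _, ht⟩ => ht ▸ div_nonneg (enormR_nonneg _) (frob_nonneg X)

lemma enormR_le_opNormL_mul_frob {X : Matrix (Fin n) (Fin n) ℂ} (hX : X.IsHermitian) :
    enormR (𝒜 X) ≤ opNormL 𝒜 * frob X := by
  rcases eq_or_ne X 0 with rfl | hX0
  · simp [enormR, frob]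
  obtain ⟨C, hC⟩ := exists_enormR_le_mul_frob 𝒜
  have hbdd : BddAbove {t : ℝ | ∃ Y : Matrix (Fin n) (Fin n) ℂ, Y.IsHermitian ∧ Y ≠ 0 ∧
      t = enormR (𝒜 Y) / frob Y} := by
    refine ⟨C, fun t ⟨Y, _, hY0, ht⟩ => ?_⟩
    rw [ht, div_le_iff₀ (frob_pos hY0)]
    exact hC Y
  rw [← div_le_iff₀ (frob_pos hX0)]
  exact le_csSup hbdd ⟨X, hX, hX0, rfl⟩

lemma frob_le_opNormL_mul_enormR (𝒜adj : (Fin m → ℝ) →ₗ[ℝ] Matrix (Fin n) (Fin n) ℂ)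
    (hadj : ∀ X : Matrix (Fin n) (Fin n) ℂ, X.IsHermitian →
      ∀ y : Fin m → ℝ, (∑ i, 𝒜 X i * y i) = ((Xᴴ * 𝒜adj y).trace).re)
    {y : Fin m → ℝ} (hy : (𝒜adj y).IsHermitian) :
    frob (𝒜adj y) ≤ opNormL 𝒜 * enormR y := by
  set M := 𝒜adj y
  have hM : frob M * frob M ≤ opNormL 𝒜 * enormR y * frob M :=
    calc frob M * frob M = ∑ i, 𝒜 M i * y i := by rw [← sq, frob_sq, hadj M hy]
      _ ≤ enormR (𝒜 M) * enormR y := sum_mul_le_enormR_mul_enormR _ _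
      _ ≤ opNormL 𝒜 * frob M * enormR y := by
        gcongr
        · exact enormR_nonneg _
        · exact enormR_le_opNormL_mul_frob 𝒜 hy
      _ = opNormL 𝒜 * enormR y * frob M := by ring
  rcases (frob_nonneg M).eq_or_lt with h0 | hpos
  · rw [← h0]
    exact mul_nonneg (opNormL_nonneg 𝒜) (enormR_nonneg y)
  · exact le_of_mul_le_mul_right hM hpos

end OpNorm

section Spectral

variable {n : ℕ}

lemma frob_mul_unitary (N : Matrix (Fin n) (Fin n) ℂ) {U : Matrix (Fin n) (Fin n) ℂ}
    (hU : U ∈ unitaryGroup (Fin n) ℂ) : frob (N * U) = frob N := by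
  have hUU : U * Uᴴ = 1 := mem_unitaryGroup_iff.mp hU
  rw [frob, frob, conjTranspose_mul, mul_assoc, trace_mul_comm, mul_assoc, mul_assoc, hUU,
    mul_one]

namespace Matrix.IsHermitian

variable {A : Matrix (Fin n) (Fin n) ℂ} (hA : A.IsHermitian)

lemma frob_sq_eq_sum_mulVec_eigenvectorBasis (N : Matrix (Fin n) (Fin n) ℂ) :
    frob N ^ 2 = ∑ i, ∑ j, ‖(N *ᵥ ⇑(hA.eigenvectorBasis i)) j‖ ^ 2 := by
  rw [← frob_mul_unitary N hA.eigenvectorUnitary.2, frob_sq, re_trace_conjTranspose_mul_self]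
  simp [mul_apply, mulVec, dotProduct]

lemma sum_norm_smul_eigenvectorBasis_sq (c : ℝ) (i : Fin n) :
    ∑ j, ‖(c • ⇑(hA.eigenvectorBasis i)) j‖ ^ 2 = c ^ 2 := by
  have h := EuclideanSpace.norm_sq_eq (c • hA.eigenvectorBasis i)
  rw [norm_smul, hA.eigenvectorBasis.orthonormal.1 i, mul_one, Real.norm_eq_abs, sq_abs] at h
  simpa using h.symm

lemma frob_sq_eq_sum_eigenvalues_sq : frob A ^ 2 = ∑ i, hA.eigenvalues i ^ 2 := by
  simp_rw [hA.frob_sq_eq_sum_mulVec_eigenvectorBasis, hA.mulVec_eigenvectorBasis,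
    hA.sum_norm_smul_eigenvectorBasis_sq]

lemma sum_sq_le_frob_sq {N : Matrix (Fin n) (Fin n) ℂ} {S : Finset (Fin n)} {μ : Fin n → ℝ}
    (hN : ∀ i ∈ S, N *ᵥ ⇑(hA.eigenvectorBasis i) = μ i • ⇑(hA.eigenvectorBasis i)) :
    ∑ i ∈ S, μ i ^ 2 ≤ frob N ^ 2 := by
  rw [hA.frob_sq_eq_sum_mulVec_eigenvectorBasis]
  calc ∑ i ∈ S, μ i ^ 2 = ∑ i ∈ S, ∑ j, ‖(N *ᵥ ⇑(hA.eigenvectorBasis i)) j‖ ^ 2 :=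
        Finset.sum_congr rfl fun i hi => by rw [hN i hi, hA.sum_norm_smul_eigenvectorBasis_sq]
    _ ≤ _ := Finset.sum_le_sum_of_subset_of_nonneg (Finset.subset_univ S) fun _ _ _ => by positivity

end Matrix.IsHermitian

lemma Matrix.PosSemidef.frob_le_re_trace {A : Matrix (Fin n) (Fin n) ℂ} (hA : A.PosSemidef) :
    frob A ≤ A.trace.re := by
  have hσ := hA.eigenvalues_nonneg
  have htr : A.trace.re = ∑ i, hA.1.eigenvalues i := by simp [hA.1.trace_eq_sum_eigenvalues]
  rw [← pow_le_pow_iff_left₀ (frob_nonneg A) (htr ▸ Finset.sum_nonneg fun i _ => hσ i) two_ne_zero,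
    hA.1.frob_sq_eq_sum_eigenvalues_sq, htr]
  exact Finset.sum_sq_le_sq_sum_of_nonneg fun i _ => hσ i

lemma re_trace_vecMulVec_self_star (x : Fin n → ℂ) :
    (vecMulVec x (star x)).trace.re = ∑ i, ‖x i‖ ^ 2 := by
  simp [trace_vecMulVec, dotProduct, Complex.re_sum, ← Complex.normSq_eq_norm_sq,
    Complex.normSq_apply]

lemma frob_vecMulVec_self_star (x : Fin n → ℂ) : frob (vecMulVec x (star x)) = ∑ i, ‖x i‖ ^ 2 := by
  rw [← pow_left_inj₀ (frob_nonneg _) (by positivity) two_ne_zero, frob_sq,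
    re_trace_conjTranspose_mul_self, sq, Finset.sum_mul_sum]
  simp [vecMulVec_apply, mul_pow, mul_comm]

end Spectral

open scoped MatrixOrder in
/-- With `S = √A` and `T = √B`, `tr (A * B) = ‖S * T‖_F²`. -/
lemma Matrix.PosSemidef.mul_eq_zero_of_trace_mul_eq_zero {ι 𝕜 : Type*} [Fintype ι]
    [DecidableEq ι] [RCLike 𝕜] {A B : Matrix ι ι 𝕜} (hA : A.PosSemidef) (hB : B.PosSemidef)
    (h : (A * B).trace = 0) : A * B = 0 := by
  set S := CFC.sqrt A
  set T := CFC.sqrt B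
  have hS : Sᴴ = S := (CFC.sqrt_nonneg A).posSemidef.1
  have hT : Tᴴ = T := (CFC.sqrt_nonneg B).posSemidef.1
  have hSS : S * S = A := CFC.sqrt_mul_sqrt_self A hA.nonneg
  have hTT : T * T = B := CFC.sqrt_mul_sqrt_self B hB.nonneg
  have hST : S * T = 0 := by
    rw [← trace_conjTranspose_mul_self_eq_zero_iff, conjTranspose_mul, hS, hT, ← h,
      ← hSS, ← hTT, mul_assoc, ← mul_assoc S, trace_mul_comm, ← mul_assoc]
  rw [← hSS, ← hTT, mul_assoc, ← mul_assoc S T, hST, zero_mul, mul_zero]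

lemma mulVec_eq_smul_of_add_smul_eq {n : ℕ} {M Λ X : Matrix (Fin n) (Fin n) ℂ} {lam F σ : ℝ}
    {v : Fin n → ℂ} (hMΛ : M + lam • (1 - F⁻¹ • X) = Λ) (hΛX : Λ * X = 0)
    (hv : X *ᵥ v = σ • v) (hσ : σ ≠ 0) :
    M *ᵥ v = (lam * (σ / F - 1)) • v := by
  have hΛv : Λ *ᵥ v = 0 := by
    have h : σ • (Λ *ᵥ v) = 0 := by rw [← mulVec_smul, ← hv, mulVec_mulVec, hΛX, zero_mulVec]
    exact (smul_eq_zero.mp h).resolve_left hσ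
  rw [eq_sub_of_add_eq hMΛ, sub_mulVec, hΛv, smul_mulVec, sub_mulVec, one_mulVec, smul_mulVec,
    hv]
  module

lemma card_eq_one_of_sum_sq_eq_one {ι : Type*} {S : Finset ι} {t : ι → ℝ}
    (ht : ∑ i ∈ S, t i ^ 2 = 1) (hdist : ∑ i ∈ S, (t i - 1) ^ 2 < (√2 - 1) ^ 2) :
    S.card = 1 := by
  have hS : S.Nonempty := Finset.nonempty_of_sum_ne_zero (ht ▸ one_ne_zero)
  have hk1 : (1 : ℝ) ≤ S.card := Nat.one_le_cast.mpr hS.card_pos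
  have hsum_le : ∑ i ∈ S, t i ≤ √S.card :=
    Real.le_sqrt_of_sq_le (by simpa [ht] using sq_sum_le_card_mul_sum_sq (s := S) (f := t))
  have hexpand : ∑ i ∈ S, (t i - 1) ^ 2 = 1 - 2 * ∑ i ∈ S, t i + S.card := by
    simp only [sub_sq, Finset.sum_add_distrib, Finset.sum_sub_distrib, ht, ← Finset.mul_sum,
      Finset.sum_const, nsmul_eq_mul, mul_one, one_pow]
  have hsqrt : √S.card - 1 < √2 - 1 := by
    refine (pow_lt_pow_iff_left₀ ?_ ?_ two_ne_zero).mp ?_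
    · linarith [Real.one_le_sqrt.mpr hk1]
    · linarith [Real.one_lt_sqrt_two]
    · nlinarith [Real.sq_sqrt (zero_le_one.trans hk1)]
  have hk2 : (S.card : ℝ) < 2 :=
    (Real.sqrt_lt_sqrt_iff (zero_le_one.trans hk1)).mp (by linarith)
  have := hS.card_pos
  have : S.card < 2 := by exact_mod_cast hk2
  omega

section Objective

variable {n m : ℕ} (𝒜 : Matrix (Fin n) (Fin n) ℂ →ₗ[ℝ] (Fin m → ℝ))

lemma half_enormR_sq_le_phi {b : Fin m → ℝ} {lam : ℝ} (hlam : 0 ≤ lam)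
    {X : Matrix (Fin n) (Fin n) ℂ} (hX : X.PosSemidef) :
    1 / 2 * enormR (𝒜 X - b) ^ 2 ≤ phi 𝒜 b lam X :=
  le_add_of_nonneg_right (mul_nonneg hlam (sub_nonneg.mpr hX.frob_le_re_trace))

lemma phi_vecMulVec_self_star (x : Fin n → ℂ) (e : Fin m → ℝ) (lam : ℝ) :
    phi 𝒜 (𝒜 (vecMulVec x (star x)) + e) lam (vecMulVec x (star x)) = 1 / 2 * enormR e ^ 2 := by
  rw [phi, re_trace_vecMulVec_self_star, frob_vecMulVec_self_star, sub_add_cancel_left, enormR_neg,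
    sub_self, mul_zero, add_zero]

lemma enormR_sub_le_of_phi_le {x : Fin n → ℂ} {e b : Fin m → ℝ}
    (hb : b = 𝒜 (vecMulVec x (star x)) + e) {lam : ℝ} (hlam : 0 ≤ lam)
    {X : Matrix (Fin n) (Fin n) ℂ} (hX : X.PosSemidef)
    (hmin : phi 𝒜 b lam X ≤ phi 𝒜 b lam (vecMulVec x (star x))) :
    enormR (𝒜 X - b) ≤ enormR e := by
  have h := (half_enormR_sq_le_phi 𝒜 hlam hX).trans hmin
  rw [hb, phi_vecMulVec_self_star, ← hb] at h
  exact (pow_le_pow_iff_left₀ (enormR_nonneg _) (enormR_nonneg _) two_ne_zero).mp (by linarith)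

end Objective

lemma Matrix.IsHermitian.rank_eq_one_of_frob_lt {n : ℕ} {X M Λ : Matrix (Fin n) (Fin n) ℂ}
    {lam : ℝ} (hX : X.IsHermitian) (hX0 : X ≠ 0) (hMΛ : M + lam • (1 - (frob X)⁻¹ • X) = Λ)
    (hΛX : Λ * X = 0) (hM : frob M < lam * (√2 - 1)) : X.rank = 1 := by
  set σ := hX.eigenvalues
  set S := Finset.univ.filter fun i => σ i ≠ 0
  have hμ : ∑ i ∈ S, (lam * (σ i / frob X - 1)) ^ 2 ≤ frob M ^ 2 :=
    hX.sum_sq_le_frob_sq fun i hi => mulVec_eq_smul_of_add_smul_eq hMΛ hΛX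
      (hX.mulVec_eigenvectorBasis i) (Finset.mem_filter.mp hi).2
  have ht : ∑ i ∈ S, (σ i / frob X) ^ 2 = 1 := by
    rw [Finset.sum_filter_of_ne (p := fun i => σ i ≠ 0) fun i _ h hσ => h (by simp [hσ])]
    simp_rw [div_pow]
    rw [← Finset.sum_div, ← hX.frob_sq_eq_sum_eigenvalues_sq,
      div_self (pow_ne_zero 2 (frob_pos hX0).ne')]
  rw [hX.rank_eq_card_non_zero_eigs, Fintype.card_subtype]
  refine card_eq_one_of_sum_sq_eq_one ht (lt_of_mul_lt_mul_left ?_ (sq_nonneg lam))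
  calc lam ^ 2 * ∑ i ∈ S, (σ i / frob X - 1) ^ 2
        = ∑ i ∈ S, (lam * (σ i / frob X - 1)) ^ 2 := by simp_rw [Finset.mul_sum, mul_pow]
    _ ≤ frob M ^ 2 := hμ
    _ < (lam * (√2 - 1)) ^ 2 := pow_lt_pow_left₀ hM (frob_nonneg M) two_ne_zero
    _ = lam ^ 2 * (√2 - 1) ^ 2 := mul_pow ..

theorem stmt_13 {n m : ℕ}
    (𝒜 : Matrix (Fin n) (Fin n) ℂ →ₗ[ℝ] (Fin m → ℝ))
    (𝒜adj : (Fin m → ℝ) →ₗ[ℝ] Matrix (Fin n) (Fin n) ℂ)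
    (hadj : ∀ X : Matrix (Fin n) (Fin n) ℂ, X.IsHermitian →
      ∀ y : Fin m → ℝ, (∑ i, 𝒜 X i * y i) = ((Xᴴ * 𝒜adj y).trace).re)
    (xhat : Fin n → ℂ) (e b : Fin m → ℝ)
    (hb : b = 𝒜 (Matrix.vecMulVec xhat (star xhat)) + e)
    (hbe : enormR e < enormR b)
    (lam : ℝ) (hlam : opNormL 𝒜 * enormR e / (Real.sqrt 2 - 1) < lam)
    (Xopt : Matrix (Fin n) (Fin n) ℂ) (hpsd : Xopt.PosSemidef)
    (hmin : ∀ X : Matrix (Fin n) (Fin n) ℂ, X.PosSemidef →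
      phi 𝒜 b lam Xopt ≤ phi 𝒜 b lam X)
    (Λ : Matrix (Fin n) (Fin n) ℂ) (hΛ : Λ.PosSemidef)
    (hstat : 𝒜adj (𝒜 Xopt - b) +
      lam • ((1 : Matrix (Fin n) (Fin n) ℂ) - (frob Xopt)⁻¹ • Xopt) = Λ)
    (hcomp : (Xoptᴴ * Λ).trace = 0) :
    Xopt.rank = 1 := by
  have hsqrt2 : 0 < √2 - 1 := sub_pos.mpr Real.one_lt_sqrt_two
  have hbound : opNormL 𝒜 * enormR e < lam * (√2 - 1) := (div_lt_iff₀ hsqrt2).mp hlam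
  have hlam0 : 0 < lam := pos_of_mul_pos_left
    ((mul_nonneg (opNormL_nonneg 𝒜) (enormR_nonneg e)).trans_lt hbound) hsqrt2.le
  have hres : enormR (𝒜 Xopt - b) ≤ enormR e :=
    enormR_sub_le_of_phi_le 𝒜 hb hlam0.le hpsd (hmin _ (posSemidef_vecMulVec_self_star xhat))
  have hX0 : Xopt ≠ 0 := by
    rintro rfl
    rw [map_zero, zero_sub, enormR_neg] at hres
    exact hres.not_gt hbe
  set M := 𝒜adj (𝒜 Xopt - b)
  have hMherm : M.IsHermitian := by
    rw [eq_sub_of_add_eq hstat]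
    exact hΛ.1.sub ((isHermitian_one.sub (hpsd.1.smul (.all _))).smul (.all _))
  have hMfrob : frob M < lam * (√2 - 1) :=
    calc frob M ≤ opNormL 𝒜 * enormR (𝒜 Xopt - b) :=
          frob_le_opNormL_mul_enormR 𝒜 𝒜adj hadj hMherm
      _ ≤ opNormL 𝒜 * enormR e := mul_le_mul_of_nonneg_left hres (opNormL_nonneg 𝒜)
      _ < lam * (√2 - 1) := hbound
  have hΛX : Λ * Xopt = 0 := by
    refine hΛ.mul_eq_zero_of_trace_mul_eq_zero hpsd ?_
    rwa [trace_mul_comm, ← hpsd.1.eq]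
  exact hpsd.1.rank_eq_one_of_frob_lt hX0 hstat hΛX hMfrob
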